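/- arXiv:2312.17406 — 5 statements merged into one kernel-verified Lean document; each statement's English description precedes it below -/
import Mathlib

section
/- For every σ > 0, every z = (z_2,…,z_d) ∈ ℝ^{d−1}, and every function f : ℝ^{d−1} → ℝ that is twice differentiable at z, the following exact operator identity holds: σ^{-1} [ (1/2) ∑_{i,j=2}^d d_{ij}(x(σ,z)) σ² ∂²f/∂z_i∂z_j(z) + ∑_{i=2}^d (μ_i(x(σ,z)) + s_i^{(σ)}(x(σ,z))) σ ∂f/∂z_i(z) ] = L̃_0 f(z) + σ^{-1} L̃_1 f(z) + σ^{-2} L̃_2 f(z), where x(σ,z) ∈ ℝ^d has first coordinate x_1 = 1 − σ^{-1}∑_{i=2}^d z_i and coordinates x_i = σ^{-1} z_i for i = 2,…,d, and where L̃_0 f(z) = (1/2)∑_{i=2}^d z_i ∂²f/∂z_i²(z) + ∑_{i=2}^d (1/2)(θ P_{1i} − z_i) ∂f/∂z_i(z); L̃_1 f(z) = −(1/2)∑_{i,j=2}^d z_i z_j ∂²f/∂z_i∂z_j(z) + ∑_{i=2}^d [ (θ/2)∑_{j=2}^d (P_{ji} − P_{1i}) z_j + (z_i/2)(−θ + σ_i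 + ∑_{j=2}^d z_j) ] ∂f/∂z_i(z); L̃_2 f(z) = −∑_{i=2}^d (1/2)(∑_{j=2}^d σ_j z_j) z_i ∂f/∂z_i(z). (This is the exact decomposition of the space–time rescaled Wright–Fisher generator whose leading term L̃_0 is the generator of the limiting CBI process.) -/
open Finset

noncomputable section

/-- Partial derivative `∂f/∂z_i(z)` of `f : ℝ^d → ℝ`. -/
def pd {d : ℕ} (f : (Fin d → ℝ) → ℝ) (z : Fin d → ℝ) (i : Fin d) : ℝ :=
  fderiv ℝ f z (Pi.single i 1)

/-- Second partial derivative `∂²f/∂z_i∂z_j(z)` of `f : ℝ^d → ℝ`. -/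
def pd2 {d : ℕ} (f : (Fin d → ℝ) → ℝ) (z : Fin d → ℝ) (i j : Fin d) : ℝ :=
  fderiv ℝ (fun y => fderiv ℝ f y (Pi.single j 1)) z (Pi.single i 1)

/-! The identity is pure algebra: the derivatives of `f` enter only as coefficients. Substituting
`x₁ = 1 - σ⁻¹ ∑ zⱼ` and `xᵢ = σ⁻¹ zᵢ` into the diffusion and drift coefficients, every term is a
polynomial in `σ⁻¹`, and collecting powers gives `L̃₀`, `L̃₁` and `L̃₂`. The only nontrivial
bookkeeping is that a sum `∑ⱼ wⱼ xⱼ` over all alleles splits into the `j = 1` term, which carries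
the `σ⁰` part, and a `σ⁻¹`-multiple of `∑_{j≥2} wⱼ zⱼ`. -/

section Rescaling

variable {ι : Type*} [Fintype ι] [DecidableEq ι] {i₀ : ι} {σ : ℝ} {z x : ι → ℝ}

theorem sum_mul_eq_of_rescaled (w : ι → ℝ)
    (hx₀ : x i₀ = 1 - σ⁻¹ * ∑ j ∈ univ.erase i₀, z j)
    (hx : ∀ j, j ≠ i₀ → x j = σ⁻¹ * z j) :
    ∑ j, w j * x j
      = w i₀ * (1 - σ⁻¹ * ∑ j ∈ univ.erase i₀, z j) + σ⁻¹ * ∑ j ∈ univ.erase i₀, w j * z j := by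
  rw [← add_sum_erase univ (fun j => w j * x j) (mem_univ i₀), hx₀,
    mul_sum (univ.erase i₀) (fun j => w j * z j)]
  congr 1
  refine sum_congr rfl fun j hj => ?_
  rw [hx j (ne_of_mem_erase hj)]
  ring

theorem diffusion_eq_of_rescaled (hσ : σ ≠ 0) (H : ι → ι → ℝ)
    (hx : ∀ j, j ≠ i₀ → x j = σ⁻¹ * z j) :
    σ⁻¹ * ((1 / 2) * ∑ i ∈ univ.erase i₀, ∑ j ∈ univ.erase i₀,
        (x i * ((if i = j then (1 : ℝ) else 0) - x j)) * σ ^ 2 * H i j)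
      = (1 / 2) * (∑ i ∈ univ.erase i₀, z i * H i i)
        + σ⁻¹ * (-(1 / 2) * ∑ i ∈ univ.erase i₀, ∑ j ∈ univ.erase i₀, z i * z j * H i j) := by
  have row : ∀ i ∈ univ.erase i₀,
      ∑ j ∈ univ.erase i₀, (x i * ((if i = j then (1 : ℝ) else 0) - x j)) * σ ^ 2 * H i j
        = σ * (z i * H i i) - ∑ j ∈ univ.erase i₀, z i * z j * H i j := by
    intro i hi
    have entry : ∀ j ∈ univ.erase i₀,
        (x i * ((if i = j then (1 : ℝ) else 0) - x j)) * σ ^ 2 * H i j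
          = (if i = j then σ * (z i * H i j) else 0) - z i * z j * H i j := by
      intro j hj
      rw [hx i (ne_of_mem_erase hi), hx j (ne_of_mem_erase hj)]
      split_ifs
      · field_simp
      · field_simp; ring
    rw [sum_congr rfl entry, sum_sub_distrib, sum_ite_eq, if_pos hi]
  rw [sum_congr rfl row, sum_sub_distrib, ← mul_sum]
  field_simp
  ring

theorem drift_eq_of_rescaled (hσ : σ ≠ 0) (θ : ℝ) (P : ι → ι → ℝ) (σs g : ι → ℝ)
    (hx₀ : x i₀ = 1 - σ⁻¹ * ∑ j ∈ univ.erase i₀, z j)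
    (hx : ∀ j, j ≠ i₀ → x j = σ⁻¹ * z j) :
    σ⁻¹ * ∑ i ∈ univ.erase i₀,
        (θ / 2 * ((∑ j, P j i * x j) - x i)
          + x i / 2 * ((if i = i₀ then σ else σs i)
              - ∑ j, (if j = i₀ then σ else σs j) * x j)) * σ * g i
      = ∑ i ∈ univ.erase i₀, (1 / 2) * (θ * P i₀ i - z i) * g i
        + σ⁻¹ * ∑ i ∈ univ.erase i₀,
            (θ / 2 * (∑ j ∈ univ.erase i₀, (P j i - P i₀ i) * z j)
              + z i / 2 * (-θ + σs i + ∑ j ∈ univ.erase i₀, z j)) * g i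
        + (σ ^ 2)⁻¹ * (-∑ i ∈ univ.erase i₀,
            (1 / 2) * (∑ j ∈ univ.erase i₀, σs j * z j) * z i * g i) := by
  have selection : ∑ j, (if j = i₀ then σ else σs j) * x j
      = σ * (1 - σ⁻¹ * ∑ j ∈ univ.erase i₀, z j) + σ⁻¹ * ∑ j ∈ univ.erase i₀, σs j * z j := by
    rw [sum_mul_eq_of_rescaled _ hx₀ hx, if_pos rfl]
    congr 2
    exact sum_congr rfl fun j hj => by rw [if_neg (ne_of_mem_erase hj)]
  have term : ∀ i ∈ univ.erase i₀,
      σ⁻¹ * ((θ / 2 * ((∑ j, P j i * x j) - x i)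
          + x i / 2 * ((if i = i₀ then σ else σs i)
              - ∑ j, (if j = i₀ then σ else σs j) * x j)) * σ * g i)
        = (1 / 2) * (θ * P i₀ i - z i) * g i
          + σ⁻¹ * ((θ / 2 * (∑ j ∈ univ.erase i₀, (P j i - P i₀ i) * z j)
              + z i / 2 * (-θ + σs i + ∑ j ∈ univ.erase i₀, z j)) * g i)
          + (σ ^ 2)⁻¹ * -((1 / 2) * (∑ j ∈ univ.erase i₀, σs j * z j) * z i * g i) := by
    intro i hi
    have hi₀ := ne_of_mem_erase hi
    have mutation : ∑ j ∈ univ.erase i₀, (P j i - P i₀ i) * z j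
        = ∑ j ∈ univ.erase i₀, P j i * z j - P i₀ i * ∑ j ∈ univ.erase i₀, z j := by
      rw [mul_sum, ← sum_sub_distrib]
      exact sum_congr rfl fun j _ => by ring
    rw [sum_mul_eq_of_rescaled _ hx₀ hx, selection, mutation, hx i hi₀, if_neg hi₀]
    field_simp
    ring
  rw [mul_sum, sum_congr rfl term]
  simp only [sum_add_distrib, ← mul_sum, sum_neg_distrib]

end Rescaling

/-- Allele `1` is the index `0 : Fin (d+2)`, the variables `z_2,…,z_d` are the coordinates `z i`,
`i ≠ 0`, and `σs i` for `i ≠ 0` are the selection parameters of the unfit alleles. -/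
theorem generator_CBI_decomposition_general {d : ℕ} (θ : ℝ)
    (P : Fin (d + 2) → Fin (d + 2) → ℝ)
    (σs : Fin (d + 2) → ℝ) (σ : ℝ) (hσ : 0 < σ)
    (z : Fin (d + 2) → ℝ)
    (f : (Fin (d + 2) → ℝ) → ℝ)
    (x : Fin (d + 2) → ℝ)
    (hx0 : x 0 = 1 - σ⁻¹ * ∑ i ∈ univ.erase 0, z i)
    (hxi : ∀ i : Fin (d + 2), i ≠ 0 → x i = σ⁻¹ * z i) :
    σ⁻¹ *
      ((1 / 2) * (∑ i ∈ univ.erase 0, ∑ j ∈ univ.erase 0,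
          (x i * ((if i = j then (1 : ℝ) else 0) - x j)) * σ ^ 2 * pd2 f z i j)
        + ∑ i ∈ univ.erase 0,
            (θ / 2 * ((∑ j, P j i * x j) - x i)
              + x i / 2
                  * ((if i = 0 then σ else σs i)
                      - ∑ j, (if j = 0 then σ else σs j) * x j)) * σ * pd f z i)
    =
    -- L̃₀ f (z)
    ((1 / 2) * (∑ i ∈ univ.erase 0, z i * pd2 f z i i)
      + ∑ i ∈ univ.erase 0, (1 / 2) * (θ * P 0 i - z i) * pd f z i)
    + σ⁻¹ *
      -- L̃₁ f (z)
      (- (1 / 2) * (∑ i ∈ univ.erase 0, ∑ j ∈ univ.erase 0,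
            z i * z j * pd2 f z i j)
        + ∑ i ∈ univ.erase 0,
            (θ / 2 * (∑ j ∈ univ.erase 0, (P j i - P 0 i) * z j)
              + z i / 2 * (- θ + σs i + ∑ j ∈ univ.erase 0, z j)) * pd f z i)
    + (σ ^ 2)⁻¹ *
      -- L̃₂ f (z)
      (- ∑ i ∈ univ.erase 0,
          (1 / 2) * (∑ j ∈ univ.erase 0, σs j * z j) * z i * pd f z i) := by
  rw [mul_add, diffusion_eq_of_rescaled hσ.ne' _ hxi,
    drift_eq_of_rescaled hσ.ne' θ P σs _ hx0 hxi]
  ring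

/-- **Exact decomposition of the space–time rescaled Wright–Fisher generator**
(proof of Proposition 2.1(c)): for every `σ > 0`, every `z` and every `f` twice
differentiable at `z`,
`σ^{-1}[ (1/2)∑_{i,j=2}^d d_{ij}(x(σ,z)) σ² ∂²f/∂z_i∂z_j(z)
+ ∑_{i=2}^d (μ_i(x(σ,z)) + s_i^{(σ)}(x(σ,z))) σ ∂f/∂z_i(z) ]
= L̃₀f(z) + σ^{-1} L̃₁f(z) + σ^{-2} L̃₂f(z)`,
where `x(σ,z)` has first coordinate `1 - σ^{-1}∑_{i=2}^d z_i` and coordinates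
`σ^{-1}z_i` for `i = 2,…,d`, and `L̃₀, L̃₁, L̃₂` are as displayed.
(Allele `1` is represented by the index `0 : Fin (d+2)`; the variables `z_2,…,z_d`
are the coordinates `z i`, `i ≠ 0`, of `z : Fin (d+2) → ℝ`; `σ_1 = σ` and the
selection parameters of the unfit alleles are `σs i`, `i ≠ 0`.) -/
theorem generator_CBI_decomposition {d : ℕ} (θ : ℝ) (hθ : 0 < θ)
    (P : Fin (d + 2) → Fin (d + 2) → ℝ)
    (hPnonneg : ∀ i j, 0 ≤ P i j) (hProw : ∀ i, ∑ j, P i j = 1)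
    (σs : Fin (d + 2) → ℝ) (σ : ℝ) (hσ : 0 < σ)
    (z : Fin (d + 2) → ℝ)
    (f : (Fin (d + 2) → ℝ) → ℝ) (hf : ContDiffAt ℝ 2 f z)
    (x : Fin (d + 2) → ℝ)
    (hx0 : x 0 = 1 - σ⁻¹ * ∑ i ∈ univ.erase 0, z i)
    (hxi : ∀ i : Fin (d + 2), i ≠ 0 → x i = σ⁻¹ * z i) :
    σ⁻¹ *
      ((1 / 2) * (∑ i ∈ univ.erase 0, ∑ j ∈ univ.erase 0,
          (x i * ((if i = j then (1 : ℝ) else 0) - x j)) * σ ^ 2 * pd2 f z i j)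
        + ∑ i ∈ univ.erase 0,
            (θ / 2 * ((∑ j, P j i * x j) - x i)
              + x i / 2
                  * ((if i = 0 then σ else σs i)
                      - ∑ j, (if j = 0 then σ else σs j) * x j)) * σ * pd f z i)
    =
    -- L̃₀ f (z)
    ((1 / 2) * (∑ i ∈ univ.erase 0, z i * pd2 f z i i)
      + ∑ i ∈ univ.erase 0, (1 / 2) * (θ * P 0 i - z i) * pd f z i)
    + σ⁻¹ *
      -- L̃₁ f (z)
      (- (1 / 2) * (∑ i ∈ univ.erase 0, ∑ j ∈ univ.erase 0,
            z i * z j * pd2 f z i j)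
        + ∑ i ∈ univ.erase 0,
            (θ / 2 * (∑ j ∈ univ.erase 0, (P j i - P 0 i) * z j)
              + z i / 2 * (- θ + σs i + ∑ j ∈ univ.erase 0, z j)) * pd f z i)
    + (σ ^ 2)⁻¹ *
      -- L̃₂ f (z)
      (- ∑ i ∈ univ.erase 0,
          (1 / 2) * (∑ j ∈ univ.erase 0, σs j * z j) * z i * pd f z i) :=
  generator_CBI_decomposition_general θ P σs σ hσ z f x hx0 hxi
end
end

section
/- Fix an integer d ≥ 2, θ > 0, and reals P_{12},…,P_{1d} > 0. Let Z_2,…,Z_d be independent random variables where Z_i has the Gamma distribution with shape θP_{1i} and rate 1 (density x^{θP_{1i}−1}e^{−x}/Γ(θP_{1i}) on (0,∞)). Then for every n ∈ ℕ^d and every σ > 0, E[ (1 − σ^{-1}∑_{i=2}^d Z_i)^{n_1} ∏_{i=2}^d (σ^{-1} Z_i)^{n_i} ] = σ^{−(‖n‖−n_1)} ∑_{k=0}^{n_1} σ^{−k} γ_k(n), where ‖n‖ = n_1+⋯+n_d and γ_k(n) = (−1)^k ∑_{k_2+⋯+k_d = k, k_i ∈ ℕ} ( n_1! / ((n_1−k)!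 k_2! ⋯ k_d!) ) ∏_{i=2}^d Γ(θP_{1i} + n_i + k_i)/Γ(θP_{1i}). -/
/-!
Expanding `(1 - σ⁻¹ ∑ Zᵢ) ^ n₁` by the binomial and multinomial theorems turns the integrand
into a polynomial in the `Zᵢ`. Under the product measure each monomial `∏ Zᵢ ^ eᵢ` integrates to
`∏ Γ(aᵢ + eᵢ) / Γ(aᵢ)`, because `x ^ m` times the `Gamma(a, r)` density is
`Γ(a + m) / (Γ(a) r ^ m)` times the `Gamma(a + m, r)` density.
-/

open Finset MeasureTheory ProbabilityTheory

namespace ProbabilityTheory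

section Moments

variable {a r : ℝ}

lemma measurable_gammaPDF (a r : ℝ) : Measurable (gammaPDF a r) :=
  (measurable_gammaPDFReal a r).ennreal_ofReal

lemma toReal_gammaPDF (ha : 0 < a) (hr : 0 < r) (x : ℝ) :
    (gammaPDF a r x).toReal = gammaPDFReal a r x :=
  ENNReal.toReal_ofReal (gammaPDFReal_nonneg ha hr x)

lemma integrable_gammaMeasure_iff (ha : 0 < a) (hr : 0 < r) {g : ℝ → ℝ} :
    Integrable g (gammaMeasure a r) ↔ Integrable fun x => g x * gammaPDFReal a r x := by
  rw [gammaMeasure, integrable_withDensity_iff (measurable_gammaPDF a r)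
    (ae_of_all _ fun _ => ENNReal.ofReal_lt_top)]
  simp only [toReal_gammaPDF ha hr]

lemma integral_gammaMeasure_eq_integral_mul (ha : 0 < a) (hr : 0 < r) (g : ℝ → ℝ) :
    ∫ x, g x ∂gammaMeasure a r = ∫ x, g x * gammaPDFReal a r x := by
  rw [gammaMeasure, integral_withDensity_eq_integral_toReal_smul
    (measurable_gammaPDF a r) (ae_of_all _ fun _ => ENNReal.ofReal_lt_top)]
  simp only [toReal_gammaPDF ha hr, smul_eq_mul, mul_comm]

lemma integrable_gammaPDFReal (ha : 0 < a) (hr : 0 < r) : Integrable (gammaPDFReal a r) := by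
  have := isProbabilityMeasure_gammaMeasure ha hr
  simpa using (integrable_gammaMeasure_iff ha hr).1 (integrable_const (1 : ℝ))

lemma integral_gammaPDFReal (ha : 0 < a) (hr : 0 < r) : ∫ x, gammaPDFReal a r x = 1 := by
  have := isProbabilityMeasure_gammaMeasure ha hr
  simpa using (integral_gammaMeasure_eq_integral_mul ha hr fun _ => 1).symm

lemma pow_mul_gammaPDFReal (ha : 0 < a) (hr : 0 < r) (m : ℕ) (x : ℝ) :
    x ^ m * gammaPDFReal a r x
      = Real.Gamma (a + m) / (Real.Gamma a * r ^ m) * gammaPDFReal (a + m) r x := by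
  rcases lt_or_ge x 0 with hx | hx
  · simp [gammaPDFReal, hx.not_ge]
  rcases Nat.eq_zero_or_pos m with rfl | hm
  · simp [(Real.Gamma_pos_of_pos ha).ne']
  have hxpow : x ^ m * x ^ (a - 1) = x ^ (a + m - 1) := by
    have : (1 : ℝ) ≤ m := by exact_mod_cast hm
    rw [mul_comm, ← Real.rpow_add_natCast' hx (by linarith)]
    ring_nf
  have hrpow : r ^ (a + m) = r ^ a * r ^ m := Real.rpow_add_natCast hr.ne' a m
  simp only [gammaPDFReal, if_pos hx, hrpow, ← hxpow]
  field_simp [(Real.Gamma_pos_of_pos ha).ne',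
    (Real.Gamma_pos_of_pos (by positivity : 0 < a + m)).ne']

lemma integrable_pow_gammaMeasure (ha : 0 < a) (hr : 0 < r) (m : ℕ) :
    Integrable (fun x => x ^ m) (gammaMeasure a r) := by
  rw [integrable_gammaMeasure_iff ha hr]
  simp only [pow_mul_gammaPDFReal ha hr]
  exact (integrable_gammaPDFReal (by positivity) hr).const_mul _

lemma integral_pow_gammaMeasure (ha : 0 < a) (hr : 0 < r) (m : ℕ) :
    ∫ x, x ^ m ∂gammaMeasure a r = Real.Gamma (a + m) / (Real.Gamma a * r ^ m) := by
  simp only [integral_gammaMeasure_eq_integral_mul ha hr, pow_mul_gammaPDFReal ha hr,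
    integral_const_mul, integral_gammaPDFReal (by positivity : 0 < a + m) hr, mul_one]

end Moments

section Pi

variable {ι : Type*} [Fintype ι] {a r : ι → ℝ}

lemma integrable_prod_pow_pi_gammaMeasure (ha : ∀ i, 0 < a i) (hr : ∀ i, 0 < r i) (e : ι → ℕ) :
    Integrable (fun Z : ι → ℝ => ∏ i, Z i ^ e i)
      (Measure.pi fun i => gammaMeasure (a i) (r i)) :=
  have := fun i => isProbabilityMeasure_gammaMeasure (ha i) (hr i)
  Integrable.fintype_prod_dep fun i => integrable_pow_gammaMeasure (ha i) (hr i) (e i)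

lemma integral_prod_pow_pi_gammaMeasure (ha : ∀ i, 0 < a i) (hr : ∀ i, 0 < r i) (e : ι → ℕ) :
    ∫ Z : ι → ℝ, ∏ i, Z i ^ e i ∂Measure.pi (fun i => gammaMeasure (a i) (r i))
      = ∏ i, Real.Gamma (a i + e i) / (Real.Gamma (a i) * r i ^ e i) := by
  have := fun i => isProbabilityMeasure_gammaMeasure (ha i) (hr i)
  rw [integral_fintype_prod_eq_prod (fun i x => x ^ e i)]
  exact prod_congr rfl fun i _ => integral_pow_gammaMeasure (ha i) (hr i) (e i)

end Pi

end ProbabilityTheory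

section Expansion

variable {ι : Type*} [Fintype ι] [DecidableEq ι]

lemma one_sub_mul_sum_pow_mul_prod_mul_pow {R : Type*} [CommRing R] (c : R) (Z : ι → R)
    (m : ℕ) (n : ι → ℕ) :
    (1 - c * ∑ i, Z i) ^ m * ∏ i, (c * Z i) ^ n i
      = c ^ (∑ i, n i) * ∑ k ∈ range (m + 1), c ^ k * ((-1) ^ k *
          ∑ κ ∈ piAntidiag univ k,
            (m.choose k * Nat.multinomial univ κ : R) * ∏ i, Z i ^ (n i + κ i)) := by
  rw [sub_eq_neg_add, add_pow, sum_mul, mul_sum (range _)]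
  refine sum_congr rfl fun k _ => ?_
  rw [neg_pow, mul_pow, sum_pow_eq_sum_piAntidiag]
  simp only [mul_sum, sum_mul]
  refine sum_congr rfl fun κ _ => ?_
  simp only [mul_pow, prod_mul_distrib, prod_pow_eq_pow_sum, pow_add]
  ring

lemma integral_one_sub_mul_sum_pow_mul_prod_mul_pow {μ : Measure (ι → ℝ)}
    (hμ : ∀ e : ι → ℕ, Integrable (fun Z => ∏ i, Z i ^ e i) μ) (c : ℝ) (m : ℕ) (n : ι → ℕ) :
    ∫ Z, (1 - c * ∑ i, Z i) ^ m * ∏ i, (c * Z i) ^ n i ∂μ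
      = c ^ (∑ i, n i) * ∑ k ∈ range (m + 1), c ^ k * ((-1) ^ k *
          ∑ κ ∈ piAntidiag univ k,
            (m.choose k * Nat.multinomial univ κ : ℝ) * ∫ Z, ∏ i, Z i ^ (n i + κ i) ∂μ) := by
  have hterm : ∀ k (κ : ι → ℕ), Integrable (fun Z => (m.choose k * Nat.multinomial univ κ : ℝ) *
      ∏ i, Z i ^ (n i + κ i)) μ := fun k κ => (hμ _).const_mul _
  simp only [one_sub_mul_sum_pow_mul_prod_mul_pow]
  rw [integral_const_mul, integral_finsetSum _ fun k _ =>
    ((integrable_finsetSum _ fun κ _ => hterm k κ).const_mul _).const_mul _]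
  refine congrArg _ (sum_congr rfl fun k _ => ?_)
  rw [integral_const_mul, integral_const_mul, integral_finsetSum _ fun κ _ => hterm k κ]
  simp only [integral_const_mul]

end Expansion

lemma Nat.cast_choose_mul_multinomial {K ι : Type*} [Field K] [CharZero K] (s : Finset ι)
    {m k : ℕ} (hkm : k ≤ m) {κ : ι → ℕ} (hκ : ∑ i ∈ s, κ i = k) :
    (m.choose k * Nat.multinomial s κ : K)
      = m.factorial / ((m - k).factorial * ∏ i ∈ s, ((κ i).factorial : K)) := by
  subst hκ
  have hfact : m.choose (∑ i ∈ s, κ i) * Nat.multinomial s κ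
      * ((m - ∑ i ∈ s, κ i).factorial * ∏ i ∈ s, (κ i).factorial) = m.factorial := by
    rw [← Nat.choose_mul_factorial_mul_factorial hkm, ← Nat.multinomial_spec]
    ring
  rw [eq_div_iff (by simp [Nat.factorial_ne_zero, prod_eq_zero_iff])]
  exact_mod_cast hfact

lemma Finset.filter_piFinset_range_sum_eq_piAntidiag {ι : Type*} [Fintype ι] [DecidableEq ι]
    (k : ℕ) :
    {κ ∈ Fintype.piFinset fun _ : ι => range (k + 1) | ∑ i, κ i = k} = piAntidiag univ k := by
  ext κ
  simp only [mem_filter, Fintype.mem_piFinset, mem_range, mem_piAntidiag, mem_univ,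
    implies_true, and_true, and_iff_right_iff_imp]
  rintro rfl i
  exact Nat.lt_succ_of_le (single_le_sum (fun j _ => Nat.zero_le (κ j)) (mem_univ i))

theorem gamma_approximation_sampling_general {d : ℕ} (θ : ℝ) (hθ : 0 < θ)
    (P1 : Fin (d + 2) → ℝ) (hP1 : ∀ i : Fin (d + 2), i ≠ 0 → 0 < P1 i)
    (n : Fin (d + 2) → ℕ) (σ : ℝ) :
    (∫ Z : {i : Fin (d + 2) // i ≠ 0} → ℝ,
        (1 - σ⁻¹ * ∑ i, Z i) ^ (n 0) * ∏ i, (σ⁻¹ * Z i) ^ (n i.1)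
      ∂(Measure.pi fun i => gammaMeasure (θ * P1 i.1) 1))
    = (σ ^ (∑ i : {i : Fin (d + 2) // i ≠ 0}, n i.1))⁻¹ *
        ∑ k ∈ range (n 0 + 1), (σ ^ k)⁻¹ *
          ((-1 : ℝ) ^ k *
            ∑ κ ∈ (Fintype.piFinset
                fun _ : {i : Fin (d + 2) // i ≠ 0} => range (k + 1)).filter
                  (fun κ => ∑ i, κ i = k),
              ((Nat.factorial (n 0) : ℝ)
                  / ((Nat.factorial (n 0 - k) : ℝ) * ∏ i, (Nat.factorial (κ i) : ℝ)))
                * ∏ i, Real.Gamma (θ * P1 i.1 + n i.1 + κ i)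
                    / Real.Gamma (θ * P1 i.1)) := by
  have ha : ∀ i : {i : Fin (d + 2) // i ≠ 0}, 0 < θ * P1 i.1 := fun i => mul_pos hθ (hP1 i.1 i.2)
  have hr : ∀ _ : {i : Fin (d + 2) // i ≠ 0}, (0 : ℝ) < 1 := fun _ => one_pos
  rw [integral_one_sub_mul_sum_pow_mul_prod_mul_pow (integrable_prod_pow_pi_gammaMeasure ha hr)]
  simp only [← inv_pow, filter_piFinset_range_sum_eq_piAntidiag]
  refine congrArg _ (sum_congr rfl fun k hk => congrArg _ (congrArg _
    (sum_congr rfl fun κ hκ => ?_)))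
  rw [integral_prod_pow_pi_gammaMeasure ha hr, Nat.cast_choose_mul_multinomial univ
    (Nat.lt_succ_iff.mp (mem_range.mp hk)) (mem_piAntidiag.mp hκ).1]
  simp only [Nat.cast_add, one_pow, mul_one, add_assoc]

/-- **Proposition 4.1 (Gamma approximation of the sampling probability)**: if
`Z_2,…,Z_d` are independent with `Z_i ∼ Gamma(θP_{1i},1)` (realised as the product
measure of the Gamma distributions), then for every `n ∈ ℕ^d` and `σ > 0`,
`E[(1-σ^{-1}∑_{i=2}^d Z_i)^{n_1} ∏_{i=2}^d (σ^{-1}Z_i)^{n_i}]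
= σ^{-(‖n‖-n_1)} ∑_{k=0}^{n_1} σ^{-k} γ_k(n)` with
`γ_k(n) = (-1)^k ∑_{k_2+⋯+k_d=k} (n_1!/((n_1-k)! k_2!⋯k_d!))
∏_{i=2}^d Γ(θP_{1i}+n_i+k_i)/Γ(θP_{1i})`.
(Allele `1` is represented by the index `0 : Fin (d+2)`; the unfit alleles are indexed
by `{i : Fin (d+2) // i ≠ 0}`.) -/
theorem gamma_approximation_sampling {d : ℕ} (θ : ℝ) (hθ : 0 < θ)
    (P1 : Fin (d + 2) → ℝ) (hP1 : ∀ i : Fin (d + 2), i ≠ 0 → 0 < P1 i)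
    (n : Fin (d + 2) → ℕ) (σ : ℝ) (hσ : 0 < σ) :
    (∫ Z : {i : Fin (d + 2) // i ≠ 0} → ℝ,
        (1 - σ⁻¹ * ∑ i, Z i) ^ (n 0) * ∏ i, (σ⁻¹ * Z i) ^ (n i.1)
      ∂(Measure.pi fun i => gammaMeasure (θ * P1 i.1) 1))
    = (σ ^ (∑ i : {i : Fin (d + 2) // i ≠ 0}, n i.1))⁻¹ *
        ∑ k ∈ range (n 0 + 1), (σ ^ k)⁻¹ *
          ((-1 : ℝ) ^ k *
            ∑ κ ∈ (Fintype.piFinset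
                fun _ : {i : Fin (d + 2) // i ≠ 0} => range (k + 1)).filter
                  (fun κ => ∑ i, κ i = k),
              ((Nat.factorial (n 0) : ℝ)
                  / ((Nat.factorial (n 0 - k) : ℝ) * ∏ i, (Nat.factorial (κ i) : ℝ)))
                * ∏ i, Real.Gamma (θ * P1 i.1 + n i.1 + κ i)
                    / Real.Gamma (θ * P1 i.1)) :=
  gamma_approximation_sampling_general θ hθ P1 hP1 n σ
end

section
/- Let q^{(σ)} be a family of sampling probabilities and let q̃_k (k ∈ ℕ) be a family of asymptotic-expansion coefficients for q^{(σ)}. Then for every k ∈ ℕ: q̃_k(e_1) = 1_{k=0} − 1_{k≥1} ∑_{i=2}^d q̃_{k−1}(e_i). -/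
/-!
Summing the consistency condition at `n = 0` gives `q(e_1) = 1 - ∑_{i ≥ 2} q(e_i)` exactly, for
every `σ > 0`. Since `σ q(e_i)` has the expansion `∑_k q̃_k(e_i) σ^{-k}`, the right-hand side
`1 - σ⁻¹ ∑_{i ≥ 2} σ q(e_i)` has an expansion in powers of `σ⁻¹` with the claimed coefficients,
and the coefficients of such an expansion are unique.
-/

open Finset Filter Asymptotics

noncomputable section

/-- The `i`-th standard unit vector of `ℤ^d`. -/
def stdE {d : ℕ} (i : Fin d) : Fin d → ℤ := fun j => if j = i then 1 else 0

/-- The total size `‖n‖ = n_1 + ⋯ + n_d` of a configuration. -/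
def tot {d : ℕ} (n : Fin d → ℤ) : ℤ := ∑ i, n i

/-- `n ∈ ℕ^d`, i.e. all components of `n : ℤ^d` are nonnegative. -/
def IsNatVec {d : ℕ} (n : Fin d → ℤ) : Prop := ∀ i, 0 ≤ n i

/-- A family of sampling probabilities `q^{(σ)} : ℤ^d → ℝ`, indexed by `σ > 0`:
`q^{(σ)}(0) = 1`; `q^{(σ)}(n) = 0` if `n` has a negative component; the consistency
condition `∑_i q^{(σ)}(n+e_i) = q^{(σ)}(n)` holds on `ℕ^d`; and the sampling recursion
holds on `ℕ^d ∖ {0}`.  (Allele `1` is represented by the index `0 : Fin d`.) -/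
def IsSamplingFamily {d : ℕ} [NeZero d] (θ : ℝ) (P : Fin d → Fin d → ℝ)
    (q : ℝ → (Fin d → ℤ) → ℝ) : Prop :=
  (∀ σ : ℝ, 0 < σ → q σ 0 = 1) ∧
  (∀ σ : ℝ, 0 < σ → ∀ n : Fin d → ℤ, (∃ i, n i < 0) → q σ n = 0) ∧
  (∀ σ : ℝ, 0 < σ → ∀ n : Fin d → ℤ, IsNatVec n →
    ∑ i, q σ (n + stdE i) = q σ n) ∧
  (∀ σ : ℝ, 0 < σ → ∀ n : Fin d → ℤ, IsNatVec n → n ≠ 0 →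
    ((tot n : ℝ) * ((tot n : ℝ) - 1 + θ) + ((tot n : ℝ) - (n 0 : ℝ)) * σ) * q σ n =
      (∑ i, (n i : ℝ) * ((n i : ℝ) - 1) * q σ (n - stdE i))
      + (∑ i, ∑ j, (n i : ℝ) * θ * P j i * q σ (n - stdE i + stdE j))
      + σ * (tot n : ℝ) * ∑ i ∈ univ.erase 0, q σ (n + stdE i))

/-- A family of asymptotic-expansion coefficients `q̃_k : ℤ^d → ℝ` for a family of
sampling probabilities `q^{(σ)}`:  `q̃_0(0) = 1`, `q̃_k(0) = 0` for `k ≥ 1`,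
`q̃_k(n) = 0` if `n` has a negative component, and for every `n ∈ ℕ^d` and `K ∈ ℕ`,
`σ^{‖n‖-n_1} q^{(σ)}(n) - ∑_{k=0}^K q̃_k(n) σ^{-k} = O(σ^{-(K+1)})` as `σ → ∞`. -/
def IsExpansionCoeffs {d : ℕ} [NeZero d] (q : ℝ → (Fin d → ℤ) → ℝ)
    (qt : ℕ → (Fin d → ℤ) → ℝ) : Prop :=
  qt 0 0 = 1 ∧
  (∀ k : ℕ, 1 ≤ k → qt k 0 = 0) ∧
  (∀ k : ℕ, ∀ n : Fin d → ℤ, (∃ i, n i < 0) → qt k n = 0) ∧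
  (∀ n : Fin d → ℤ, IsNatVec n → ∀ K : ℕ,
    (fun σ : ℝ => σ ^ (tot n - n 0) * q σ n
        - ∑ k ∈ range (K + 1), qt k n * σ ^ (-(k : ℤ)))
      =O[atTop] fun σ : ℝ => σ ^ (-(K + 1 : ℤ)))

lemma isBigO_zpow_zpow_atTop {a b : ℤ} (h : a ≤ b) :
    (fun σ : ℝ => σ ^ a) =O[atTop] fun σ => σ ^ b := by
  refine IsBigO.of_bound 1 ?_
  filter_upwards [eventually_ge_atTop (1 : ℝ)] with σ hσ
  have hσ0 : 0 < σ := one_pos.trans_le hσ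
  rw [one_mul, Real.norm_of_nonneg (zpow_pos hσ0 a).le, Real.norm_of_nonneg (zpow_pos hσ0 b).le]
  exact zpow_le_zpow_right₀ hσ h

lemma eq_zero_of_mul_zpow_neg_isBigO {c : ℝ} {k : ℤ}
    (h : (fun σ : ℝ => c * σ ^ (-k)) =O[atTop] fun σ => σ ^ (-(k + 1))) : c = 0 := by
  have hc : (fun _ : ℝ => c) =O[atTop] fun σ : ℝ => σ ^ (-1 : ℤ) := by
    refine (h.mul (isBigO_refl (fun σ : ℝ => σ ^ k) atTop)).congr' ?_ ?_
    · filter_upwards [eventually_gt_atTop 0] with σ hσ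
      rw [mul_assoc, ← zpow_add₀ hσ.ne', neg_add_cancel, zpow_zero, mul_one]
    · filter_upwards [eventually_gt_atTop 0] with σ hσ
      rw [← zpow_add₀ hσ.ne']
      ring_nf
  exact tendsto_nhds_unique tendsto_const_nhds
    (hc.trans_tendsto (tendsto_zpow_atTop_zero (by norm_num)))

lemma inv_mul_zpow_neg {G₀ : Type*} [GroupWithZero G₀] (x : G₀) (k : ℕ) :
    x⁻¹ * x ^ (-(k : ℤ)) = x ^ (-(k + 1 : ℤ)) := by
  rw [← zpow_neg_one, ← zpow_add' (Or.inr (Or.inl (by omega)))]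
  ring_nf

def HasAsymptoticExpansion (f : ℝ → ℝ) (a : ℕ → ℝ) : Prop :=
  ∀ K : ℕ, (fun σ => f σ - ∑ k ∈ range (K + 1), a k * σ ^ (-(k : ℤ)))
    =O[atTop] fun σ => σ ^ (-(K + 1 : ℤ))

namespace HasAsymptoticExpansion

variable {f g : ℝ → ℝ} {a b : ℕ → ℝ}

theorem coeff_unique (hf : HasAsymptoticExpansion f a) (hg : HasAsymptoticExpansion f b) :
    a = b := by
  funext k
  induction k using Nat.strong_induction_on with
  | _ k ih =>
    refine sub_eq_zero.1 (eq_zero_of_mul_zpow_neg_isBigO (k := k)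
      (((hg k).sub (hf k)).congr_left fun σ => ?_))
    have hlow : ∑ m ∈ range k, a m * σ ^ (-(m : ℤ)) = ∑ m ∈ range k, b m * σ ^ (-(m : ℤ)) :=
      sum_congr rfl fun m hm => by rw [ih m (mem_range.1 hm)]
    rw [sum_range_succ, sum_range_succ, hlow]
    ring

theorem congr (hf : HasAsymptoticExpansion f a) (hfg : f =ᶠ[atTop] g) :
    HasAsymptoticExpansion g a :=
  fun K => (hf K).congr' (hfg.mono fun σ hσ => by simp only [hσ]) EventuallyEq.rfl

theorem sub (hf : HasAsymptoticExpansion f a) (hg : HasAsymptoticExpansion g b) :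
    HasAsymptoticExpansion (fun σ => f σ - g σ) fun k => a k - b k :=
  fun K => ((hf K).sub (hg K)).congr_left fun σ => by
    simp only [sub_mul, sum_sub_distrib]
    ring

theorem isBigO_sub_sum_range (hf : HasAsymptoticExpansion f a) (K : ℕ) :
    (fun σ => f σ - ∑ k ∈ range K, a k * σ ^ (-(k : ℤ))) =O[atTop] fun σ => σ ^ (-(K : ℤ)) := by
  cases K with
  | zero =>
    have hconst : (fun _ : ℝ => a 0) =O[atTop] fun σ : ℝ => σ ^ (0 : ℤ) := by
      simpa using isBigO_const_const (a 0) (one_ne_zero (α := ℝ)) (atTop : Filter ℝ)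
    simpa using ((hf 0).trans (isBigO_zpow_zpow_atTop (b := 0) (by norm_num))).add hconst
  | succ K => simpa using hf K

theorem inv_mul (hf : HasAsymptoticExpansion f a) :
    HasAsymptoticExpansion (fun σ => σ⁻¹ * f σ) fun k => if 1 ≤ k then a (k - 1) else 0 := by
  intro K
  refine ((isBigO_refl (fun σ : ℝ => σ⁻¹) atTop).mul (hf.isBigO_sub_sum_range K)).congr
    (fun σ => ?_) (fun σ => inv_mul_zpow_neg σ K)
  rw [sum_range_succ', mul_sub, mul_sum]
  simp only [Nat.cast_succ, ← inv_mul_zpow_neg]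
  simp [mul_left_comm]

end HasAsymptoticExpansion

theorem hasAsymptoticExpansion_const (c : ℝ) :
    HasAsymptoticExpansion (fun _ => c) fun k => if k = 0 then c else 0 :=
  fun K => (isBigO_zero _ _).congr_left fun σ => by simp

theorem hasAsymptoticExpansion_sum {ι : Type*} {s : Finset ι} {f : ι → ℝ → ℝ} {a : ι → ℕ → ℝ}
    (h : ∀ i ∈ s, HasAsymptoticExpansion (f i) (a i)) :
    HasAsymptoticExpansion (fun σ => ∑ i ∈ s, f i σ) fun k => ∑ i ∈ s, a i k :=
  fun K => (IsBigO.fun_sum fun i hi => h i hi K).congr_left fun σ => by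
    simp only [sum_mul, sum_sub_distrib]
    rw [sum_comm]

section Sampling

variable {d : ℕ}

lemma stdE_self (i : Fin d) : stdE i i = 1 := if_pos rfl

lemma stdE_of_ne {i j : Fin d} (h : j ≠ i) : stdE i j = 0 := if_neg h

lemma tot_stdE (i : Fin d) : tot (stdE i) = 1 := by
  simp [tot, stdE]

lemma isNatVec_stdE (i : Fin d) : IsNatVec (stdE i) := fun j => by
  unfold stdE
  split_ifs <;> norm_num

variable [NeZero d] {q : ℝ → (Fin d → ℤ) → ℝ}

lemma IsSamplingFamily.sum_stdE {θ : ℝ} {P : Fin d → Fin d → ℝ} (hq : IsSamplingFamily θ P q)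
    {σ : ℝ} (hσ : 0 < σ) : ∑ i, q σ (stdE i) = 1 := by
  simpa [hq.1 σ hσ] using hq.2.2.1 σ hσ 0 fun _ => le_rfl

lemma IsExpansionCoeffs.hasAsymptoticExpansion {qt : ℕ → (Fin d → ℤ) → ℝ}
    (hqt : IsExpansionCoeffs q qt) {n : Fin d → ℤ} (hn : IsNatVec n) :
    HasAsymptoticExpansion (fun σ => σ ^ (tot n - n 0) * q σ n) fun k => qt k n :=
  hqt.2.2.2 n hn

end Sampling

theorem boundary_fit_general {d : ℕ} (θ : ℝ)
    (P : Fin (d + 2) → Fin (d + 2) → ℝ)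
    (q : ℝ → (Fin (d + 2) → ℤ) → ℝ) (qt : ℕ → (Fin (d + 2) → ℤ) → ℝ)
    (hq : IsSamplingFamily θ P q) (hqt : IsExpansionCoeffs q qt) (k : ℕ) :
    qt k (stdE 0)
      = (if k = 0 then 1 else 0)
        - (if 1 ≤ k then ∑ i ∈ univ.erase 0, qt (k - 1) (stdE i) else 0) := by
  have hfit : HasAsymptoticExpansion (fun σ => q σ (stdE 0)) fun k => qt k (stdE 0) := by
    simpa [tot_stdE, stdE_self] using hqt.hasAsymptoticExpansion (isNatVec_stdE 0)
  have hunfit : ∀ i ∈ univ.erase (0 : Fin (d + 2)),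
      HasAsymptoticExpansion (fun σ => σ * q σ (stdE i)) fun k => qt k (stdE i) := by
    intro i hi
    simpa [tot_stdE, stdE_of_ne (ne_of_mem_erase hi).symm] using
      hqt.hasAsymptoticExpansion (isNatVec_stdE i)
  have hcons : (fun σ => 1 - σ⁻¹ * ∑ i ∈ univ.erase 0, σ * q σ (stdE i))
      =ᶠ[atTop] fun σ => q σ (stdE 0) := by
    filter_upwards [eventually_gt_atTop 0] with σ hσ
    rw [← mul_sum, inv_mul_cancel_left₀ hσ.ne', ← hq.sum_stdE hσ,
      ← add_sum_erase _ _ (mem_univ 0)]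
    ring
  have hrhs := ((hasAsymptoticExpansion_const 1).sub
    (hasAsymptoticExpansion_sum hunfit).inv_mul).congr hcons
  exact congrFun (hrhs.coeff_unique hfit).symm k

/-- **Theorem 4.3(I)** (boundary, fit allele): `q̃_k(e_1) = 1_{k=0} - 1_{k≥1} ∑_{i=2}^d q̃_{k-1}(e_i)`. -/
theorem boundary_fit {d : ℕ} (θ : ℝ) (hθ : 0 < θ)
    (P : Fin (d + 2) → Fin (d + 2) → ℝ)
    (hPnonneg : ∀ i j, 0 ≤ P i j) (hProw : ∀ i, ∑ j, P i j = 1)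
    (q : ℝ → (Fin (d + 2) → ℤ) → ℝ) (qt : ℕ → (Fin (d + 2) → ℤ) → ℝ)
    (hq : IsSamplingFamily θ P q) (hqt : IsExpansionCoeffs q qt) (k : ℕ) :
    qt k (stdE 0)
      = (if k = 0 then 1 else 0)
        - (if 1 ≤ k then ∑ i ∈ univ.erase 0, qt (k - 1) (stdE i) else 0) :=
  boundary_fit_general θ P q qt hq hqt k
end
end

section
/- Let q^{(σ)} be a family of sampling probabilities and let q̃_k (k ∈ ℕ) be a family of asymptotic-expansion coefficients for q^{(σ)}. Then for every k ∈ ℕ and every n ∈ ℕ^d with ‖n‖ > 1: (‖n‖ − n_1) q̃_k(n) = ∑_{i=2}^d n_i(n_i − 1 + θ P_{1i}) q̃_k(n − e_i) + 1_{k≥1} [ (n_1(n_1 − 1 + θ P_{11}) − ‖n‖(‖n‖ − 1 + θ)) q̃_{k−1}(n) + ∑_{i,j=2}^d n_i θ (P_{ji} − P_{1i}) q̃_{k−1}(n − e_i + e_j) + ‖n‖ ∑_{i=2}^d q̃_{k−1}(n + e_i) ] + 1_{k≥2} ∑_{j=2}^d n_1 (n_1 − 1 + θ P_{j1}) q̃_{k−2}(n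 − e_1 + e_j). -/
open Finset Filter Asymptotics

noncomputable section

/-!
Multiplying the sampling recursion at `n` by `σ^{‖n‖-n_1-1}`, and using the consistency condition
at `n - e_i` to eliminate `q^{(σ)}(n - e_i + e_1)`, turns it into a linear relation with
coefficients `1, σ⁻¹, σ⁻²` between the rescaled probabilities `σ^{‖m‖-m_1} q^{(σ)}(m)`; for
`m ∉ ℕ^d` these vanish, and so do the `q̃_k(m)`, so every rescaled probability has the expansion
`∑ q̃_k(m) σ⁻ᵏ`. Such expansions are linear and unique, and multiplication by `σ⁻ˢ` shifts their
coefficients by `s`, so comparing coefficients gives the recursion.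
-/

def HasAsympExpansion (F : ℝ → ℝ) (a : ℕ → ℝ) : Prop :=
  ∀ K : ℕ, (fun σ => F σ - ∑ k ∈ range (K + 1), a k * σ ^ (-(k : ℤ)))
    =O[atTop] fun σ : ℝ => σ ^ (-(K + 1 : ℤ))

def shiftCoeffs (s : ℕ) (a : ℕ → ℝ) (k : ℕ) : ℝ := if s ≤ k then a (k - s) else 0

lemma zpow_isBigO_zpow_atTop {a b : ℤ} (hab : a ≤ b) :
    (fun σ : ℝ => σ ^ a) =O[atTop] fun σ => σ ^ b := by
  refine IsBigO.of_bound 1 ?_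
  filter_upwards [eventually_ge_atTop 1] with σ hσ
  have hσ0 : 0 < σ := one_pos.trans_le hσ
  rw [Real.norm_of_nonneg (zpow_pos hσ0 _).le, Real.norm_of_nonneg (zpow_pos hσ0 _).le, one_mul]
  exact zpow_le_zpow_right₀ hσ hab

namespace HasAsympExpansion

variable {F G : ℝ → ℝ} {a b : ℕ → ℝ}

lemma congr (h : HasAsympExpansion F a) (hFG : F =ᶠ[atTop] G) : HasAsympExpansion G a :=
  fun K => (h K).congr' (hFG.mono fun σ hσ => by simp only [hσ]) .rfl

lemma zero : HasAsympExpansion (fun _ => 0) (fun _ => 0) :=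
  fun K => by simpa using isBigO_zero _ _

lemma add (hF : HasAsympExpansion F a) (hG : HasAsympExpansion G b) :
    HasAsympExpansion (fun σ => F σ + G σ) (fun k => a k + b k) :=
  fun K => ((hF K).add (hG K)).congr_left fun σ => by
    simp only [add_mul, sum_add_distrib]; ring

lemma const_mul (hF : HasAsympExpansion F a) (c : ℝ) :
    HasAsympExpansion (fun σ => c * F σ) (fun k => c * a k) :=
  fun K => ((hF K).const_mul_left c).congr_left fun σ => by
    simp only [mul_sub, mul_sum, mul_assoc]

lemma sum {ι : Type*} (s : Finset ι) {F : ι → ℝ → ℝ} {a : ι → ℕ → ℝ}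
    (h : ∀ i ∈ s, HasAsympExpansion (F i) (a i)) :
    HasAsympExpansion (fun σ => ∑ i ∈ s, F i σ) (fun k => ∑ i ∈ s, a i k) := by
  classical
  induction s using Finset.induction_on with
  | empty => simpa using zero
  | insert i s hi ih =>
    simp only [sum_insert hi]
    exact (h i (mem_insert_self i s)).add (ih fun j hj => h j (mem_insert_of_mem hj))

lemma isBigO_one (hF : HasAsympExpansion F a) : F =O[atTop] fun _ => (1 : ℝ) := by
  have h0 : (fun σ => F σ - a 0) =O[atTop] fun _ => (1 : ℝ) :=
    ((hF 0).congr_left fun σ => by simp).trans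
      ((zpow_isBigO_zpow_atTop (by norm_num : (-(0 + 1) : ℤ) ≤ 0)).congr_right fun σ => by simp)
  exact (h0.add (isBigO_const_const (a 0) one_ne_zero atTop)).congr_left fun σ => by ring

lemma inv_pow_mul (hF : HasAsympExpansion F a) (s : ℕ) :
    HasAsympExpansion (fun σ => σ⁻¹ ^ s * F σ) (shiftCoeffs s a) := by
  intro K
  rcases lt_or_ge K s with hKs | hsK
  · have hlow : ∀ σ : ℝ, ∑ k ∈ range (K + 1), shiftCoeffs s a k * σ ^ (-(k : ℤ)) = 0 :=
      fun σ => sum_eq_zero fun k hk => by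
        rw [shiftCoeffs, if_neg (by rw [mem_range] at hk; omega), zero_mul]
    simp only [hlow, sub_zero]
    have hpow : (fun σ : ℝ => σ⁻¹ ^ s) =O[atTop] fun σ => σ ^ (-(K + 1 : ℤ)) :=
      (zpow_isBigO_zpow_atTop (by omega : -(s : ℤ) ≤ -(K + 1 : ℤ))).congr_left
        fun σ => by simp [zpow_neg]
    exact (hpow.mul hF.isBigO_one).congr_right fun σ => mul_one _
  · obtain ⟨L, rfl⟩ := Nat.exists_eq_add_of_le hsK
    have hsum : ∀ σ : ℝ, ∑ k ∈ range (s + L + 1), shiftCoeffs s a k * σ ^ (-(k : ℤ))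
        = σ⁻¹ ^ s * ∑ k ∈ range (L + 1), a k * σ ^ (-(k : ℤ)) := fun σ => by
      rw [add_assoc, sum_range_add, mul_sum, sum_eq_zero fun k hk => by
        rw [shiftCoeffs, if_neg (by rw [mem_range] at hk; omega), zero_mul], zero_add]
      refine sum_congr rfl fun k _ => ?_
      simp only [shiftCoeffs, le_add_iff_nonneg_right, zero_le, if_true, add_tsub_cancel_left,
        zpow_neg, zpow_natCast]
      ring
    refine ((isBigO_refl (fun σ : ℝ => σ⁻¹ ^ s) atTop).mul (hF L)).congr
      (fun σ => by rw [hsum, mul_sub]) fun σ => ?_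
    rw [show (-((s + L : ℕ) + 1 : ℤ)) = -((s + (L + 1) : ℕ) : ℤ) by push_cast; ring,
      show (-(L + 1 : ℤ)) = -((L + 1 : ℕ) : ℤ) by push_cast; ring]
    simp only [zpow_neg, zpow_natCast]
    ring

lemma unique (ha : HasAsympExpansion F a) (hb : HasAsympExpansion F b) : a = b := by
  funext k
  induction k using Nat.strong_induction_on with
  | _ k ih =>
  have hdiff : (fun σ : ℝ => (b k - a k) * σ ^ (-(k : ℤ))) =O[atTop]
      fun σ => σ ^ (-(k + 1 : ℤ)) := by
    refine ((ha k).sub (hb k)).congr_left fun σ => ?_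
    rw [sum_range_succ, sum_range_succ,
      sum_congr rfl fun j hj => by rw [ih j (mem_range.1 hj)]]
    ring
  have hconst : (fun _ : ℝ => b k - a k) =O[atTop] fun σ => σ ^ (-1 : ℤ) := by
    refine (hdiff.mul (isBigO_refl (fun σ : ℝ => σ ^ (k : ℤ)) atTop)).congr' ?_ ?_ <;>
      filter_upwards [eventually_gt_atTop 0] with σ hσ
    · rw [mul_assoc, ← zpow_add₀ hσ.ne', neg_add_cancel, zpow_zero, mul_one]
    · rw [← zpow_add₀ hσ.ne']
      ring_nf
  have hlim := hconst.trans_tendsto (tendsto_zpow_atTop_zero (by norm_num))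
  exact (sub_eq_zero.1 (tendsto_const_nhds_iff.1 hlim)).symm

end HasAsympExpansion

lemma IsNatVec.sub_stdE {d : ℕ} {n : Fin d → ℤ} (hn : IsNatVec n) {i : Fin d} (hi : 0 < n i) :
    IsNatVec (n - stdE i) := fun j => by
  have := hn j
  simp only [stdE, Pi.sub_apply]
  split_ifs with h
  · subst h; omega
  · omega

section Sampling

variable {d : ℕ} [NeZero d] {θ : ℝ} {P : Fin d → Fin d → ℝ} {q : ℝ → (Fin d → ℤ) → ℝ}

def rescaledProb (q : ℝ → (Fin d → ℤ) → ℝ) (m : Fin d → ℤ) (σ : ℝ) : ℝ :=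
  σ ^ (tot m - m 0) * q σ m

lemma tot_sub_apply_zero_add_stdE (m : Fin d → ℤ) (i : Fin d) :
    tot (m + stdE i) - (m + stdE i) 0 = tot m - m 0 + if i = 0 then 0 else 1 := by
  rcases eq_or_ne i 0 with rfl | hi
  · simp [tot, stdE, sum_add_distrib]
  · simp [tot, stdE, sum_add_distrib, hi, hi.symm]
    ring

lemma tot_sub_apply_zero_sub_stdE (m : Fin d → ℤ) (i : Fin d) :
    tot (m - stdE i) - (m - stdE i) 0 = tot m - m 0 - if i = 0 then 0 else 1 := by
  rcases eq_or_ne i 0 with rfl | hi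
  · simp [tot, stdE, sum_sub_distrib]
  · simp [tot, stdE, sum_sub_distrib, hi, hi.symm]
    ring

lemma IsSamplingFamily.mul_consistency (hq : IsSamplingFamily θ P q) {n : Fin d → ℤ}
    (hn : IsNatVec n) {σ : ℝ} (hσ : 0 < σ) (i : Fin d) :
    (n i : ℝ) * q σ (n - stdE i)
      = n i * (q σ (n - stdE i + stdE 0) + ∑ j ∈ univ.erase 0, q σ (n - stdE i + stdE j)) := by
  rcases (hn i).eq_or_lt with h | h
  · simp [← h]
  · rw [add_sum_erase univ (fun j => q σ (n - stdE i + stdE j)) (mem_univ 0),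
      hq.2.2.1 σ hσ _ (hn.sub_stdE h)]

lemma IsSamplingFamily.recursion_reduced (hq : IsSamplingFamily θ P q) {n : Fin d → ℤ}
    (hn : IsNatVec n) {σ : ℝ} (hσ : 0 < σ) :
    ((tot n : ℝ) - n 0) * σ * q σ n
      = (∑ i ∈ univ.erase 0, (n i : ℝ) * (n i - 1 + θ * P 0 i) * q σ (n - stdE i))
        + (((n 0 : ℝ) * (n 0 - 1 + θ * P 0 0) - tot n * (tot n - 1 + θ)) * q σ n
          + (∑ i ∈ univ.erase 0, ∑ j ∈ univ.erase 0,
              (n i : ℝ) * θ * (P j i - P 0 i) * q σ (n - stdE i + stdE j))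
          + tot n * σ * ∑ i ∈ univ.erase 0, q σ (n + stdE i))
        + ∑ j ∈ univ.erase 0, (n 0 : ℝ) * (n 0 - 1 + θ * P j 0) * q σ (n - stdE 0 + stdE j) := by
  rcases eq_or_ne n 0 with rfl | hn0
  · simp [tot]
  have hsplit (f : Fin d → ℝ) : ∑ i, f i = f 0 + ∑ i ∈ univ.erase 0, f i :=
    (add_sum_erase _ f (mem_univ 0)).symm
  have row_zero : (n 0 : ℝ) * (n 0 - 1) * q σ (n - stdE 0)
        + ∑ j, n 0 * θ * P j 0 * q σ (n - stdE 0 + stdE j)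
      = n 0 * (n 0 - 1 + θ * P 0 0) * q σ n
        + ∑ j ∈ univ.erase 0, n 0 * (n 0 - 1 + θ * P j 0) * q σ (n - stdE 0 + stdE j) := by
    have hc := hq.mul_consistency hn hσ 0
    rw [sub_add_cancel] at hc
    have hsum : ∑ j ∈ univ.erase 0, (n 0 : ℝ) * (n 0 - 1 + θ * P j 0) * q σ (n - stdE 0 + stdE j)
        = (n 0 - 1) * (n 0 * ∑ j ∈ univ.erase 0, q σ (n - stdE 0 + stdE j))
          + ∑ j ∈ univ.erase 0, n 0 * θ * P j 0 * q σ (n - stdE 0 + stdE j) := by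
      rw [mul_sum, mul_sum, ← sum_add_distrib]
      exact sum_congr rfl fun j _ => by ring
    rw [hsplit, sub_add_cancel, hsum]
    linear_combination (n 0 - 1 : ℝ) * hc
  have row_ne_zero : ∀ i ∈ univ.erase 0, (n i : ℝ) * (n i - 1) * q σ (n - stdE i)
        + ∑ j, n i * θ * P j i * q σ (n - stdE i + stdE j)
      = n i * (n i - 1 + θ * P 0 i) * q σ (n - stdE i)
        + ∑ j ∈ univ.erase 0, n i * θ * (P j i - P 0 i) * q σ (n - stdE i + stdE j) := by
    intro i _
    have hc := hq.mul_consistency hn hσ i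
    have hsum : ∑ j ∈ univ.erase 0, (n i : ℝ) * θ * (P j i - P 0 i) * q σ (n - stdE i + stdE j)
        = ∑ j ∈ univ.erase 0, n i * θ * P j i * q σ (n - stdE i + stdE j)
          - θ * P 0 i * (n i * ∑ j ∈ univ.erase 0, q σ (n - stdE i + stdE j)) := by
      rw [mul_sum, mul_sum, ← sum_sub_distrib]
      exact sum_congr rfl fun j _ => by ring
    rw [hsplit, hsum]
    linear_combination -θ * P 0 i * hc
  have hrows := calc
    (∑ i, (n i : ℝ) * (n i - 1) * q σ (n - stdE i))
        + ∑ i, ∑ j, (n i : ℝ) * θ * P j i * q σ (n - stdE i + stdE j)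
      = ∑ i, ((n i : ℝ) * (n i - 1) * q σ (n - stdE i)
          + ∑ j, n i * θ * P j i * q σ (n - stdE i + stdE j)) := sum_add_distrib.symm
    _ = n 0 * (n 0 - 1 + θ * P 0 0) * q σ n
          + (∑ j ∈ univ.erase 0, n 0 * (n 0 - 1 + θ * P j 0) * q σ (n - stdE 0 + stdE j))
          + ((∑ i ∈ univ.erase 0, n i * (n i - 1 + θ * P 0 i) * q σ (n - stdE i))
            + ∑ i ∈ univ.erase 0, ∑ j ∈ univ.erase 0,
                n i * θ * (P j i - P 0 i) * q σ (n - stdE i + stdE j)) := by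
      rw [hsplit, row_zero, sum_congr rfl row_ne_zero, sum_add_distrib]
  linear_combination hq.2.2.2 σ hσ n hn hn0 + hrows

lemma mul_rescaledProb_eq_zpow_mul {m n : Fin d → ℤ} {σ : ℝ} {e : ℤ} (hσ : σ ≠ 0)
    (he : tot m - m 0 = tot n - n 0 + e) (c : ℝ) :
    c * rescaledProb q m σ = σ ^ (tot n - n 0) * σ ^ e * (c * q σ m) := by
  rw [rescaledProb, he, zpow_add₀ hσ]
  ring

lemma IsSamplingFamily.rescaledProb_recursion (hq : IsSamplingFamily θ P q) {n : Fin d → ℤ}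
    (hn : IsNatVec n) {σ : ℝ} (hσ : 0 < σ) :
    ((tot n : ℝ) - n 0) * rescaledProb q n σ
      = (∑ i ∈ univ.erase 0, (n i : ℝ) * (n i - 1 + θ * P 0 i) * rescaledProb q (n - stdE i) σ)
        + σ⁻¹ * (((n 0 : ℝ) * (n 0 - 1 + θ * P 0 0) - tot n * (tot n - 1 + θ))
              * rescaledProb q n σ
            + (∑ i ∈ univ.erase 0, ∑ j ∈ univ.erase 0,
                (n i : ℝ) * θ * (P j i - P 0 i) * rescaledProb q (n - stdE i + stdE j) σ)
            + tot n * ∑ i ∈ univ.erase 0, rescaledProb q (n + stdE i) σ)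
        + σ⁻¹ ^ 2 * ∑ j ∈ univ.erase 0,
            (n 0 : ℝ) * (n 0 - 1 + θ * P j 0) * rescaledProb q (n - stdE 0 + stdE j) σ := by
  have hσ0 : σ ≠ 0 := hσ.ne'
  set X := σ ^ (tot n - n 0)
  have hA : ∑ i ∈ univ.erase 0, (n i : ℝ) * (n i - 1 + θ * P 0 i) * rescaledProb q (n - stdE i) σ
      = X * σ⁻¹ * ∑ i ∈ univ.erase 0, (n i : ℝ) * (n i - 1 + θ * P 0 i) * q σ (n - stdE i) := by
    rw [mul_sum]
    refine sum_congr rfl fun i hi => ?_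
    rw [mul_rescaledProb_eq_zpow_mul (n := n) (e := -1) hσ0 (by
      rw [tot_sub_apply_zero_sub_stdE, if_neg (ne_of_mem_erase hi)]; ring), zpow_neg_one]
  have hB : ∑ i ∈ univ.erase 0, ∑ j ∈ univ.erase 0,
        (n i : ℝ) * θ * (P j i - P 0 i) * rescaledProb q (n - stdE i + stdE j) σ
      = X * ∑ i ∈ univ.erase 0, ∑ j ∈ univ.erase 0,
        (n i : ℝ) * θ * (P j i - P 0 i) * q σ (n - stdE i + stdE j) := by
    rw [mul_sum]
    refine sum_congr rfl fun i hi => ?_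
    rw [mul_sum]
    refine sum_congr rfl fun j hj => ?_
    rw [mul_rescaledProb_eq_zpow_mul (n := n) (e := 0) hσ0 (by
      rw [tot_sub_apply_zero_add_stdE, tot_sub_apply_zero_sub_stdE, if_neg (ne_of_mem_erase hi),
        if_neg (ne_of_mem_erase hj)]; ring), zpow_zero, mul_one]
  have hB' : (tot n : ℝ) * ∑ i ∈ univ.erase 0, rescaledProb q (n + stdE i) σ
      = X * σ * (tot n * ∑ i ∈ univ.erase 0, q σ (n + stdE i)) := by
    simp only [mul_sum]
    refine sum_congr rfl fun i hi => ?_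
    rw [mul_rescaledProb_eq_zpow_mul (n := n) (e := 1) hσ0 (by
      rw [tot_sub_apply_zero_add_stdE, if_neg (ne_of_mem_erase hi)]), zpow_one]
  have hC : ∑ j ∈ univ.erase 0,
        (n 0 : ℝ) * (n 0 - 1 + θ * P j 0) * rescaledProb q (n - stdE 0 + stdE j) σ
      = X * σ * ∑ j ∈ univ.erase 0,
        (n 0 : ℝ) * (n 0 - 1 + θ * P j 0) * q σ (n - stdE 0 + stdE j) := by
    rw [mul_sum]
    refine sum_congr rfl fun j hj => ?_
    rw [mul_rescaledProb_eq_zpow_mul (n := n) (e := 1) hσ0 (by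
      rw [tot_sub_apply_zero_add_stdE, tot_sub_apply_zero_sub_stdE, if_pos rfl,
        if_neg (ne_of_mem_erase hj)]; ring), zpow_one]
  have hX : rescaledProb q n σ = X * q σ n := rfl
  rw [hA, hB, hB', hC, hX]
  linear_combination X * σ⁻¹ * hq.recursion_reduced hn hσ
    - X * (((tot n : ℝ) - n 0) * q σ n + σ⁻¹ * ∑ j ∈ univ.erase 0,
        (n 0 : ℝ) * (n 0 - 1 + θ * P j 0) * q σ (n - stdE 0 + stdE j)) * mul_inv_cancel₀ hσ0

lemma IsSamplingFamily.hasAsympExpansion_rescaledProb (hq : IsSamplingFamily θ P q)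
    {qt : ℕ → (Fin d → ℤ) → ℝ} (hqt : IsExpansionCoeffs q qt) (m : Fin d → ℤ) :
    HasAsympExpansion (rescaledProb q m) fun k => qt k m := by
  by_cases hm : IsNatVec m
  · exact hqt.2.2.2 m hm
  obtain ⟨i, hi⟩ : ∃ i, m i < 0 := by simpa [IsNatVec] using hm
  have hqt0 : (fun k => qt k m) = fun _ => 0 := funext fun k => hqt.2.2.1 k m ⟨i, hi⟩
  rw [hqt0]
  refine HasAsympExpansion.zero.congr ?_
  filter_upwards [eventually_gt_atTop 0] with σ hσ
  rw [rescaledProb, hq.2.1 σ hσ m ⟨i, hi⟩, mul_zero]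

end Sampling

theorem recursion_general_general {d : ℕ} (θ : ℝ)
    (P : Fin (d + 2) → Fin (d + 2) → ℝ)
    (q : ℝ → (Fin (d + 2) → ℤ) → ℝ) (qt : ℕ → (Fin (d + 2) → ℤ) → ℝ)
    (hq : IsSamplingFamily θ P q) (hqt : IsExpansionCoeffs q qt)
    (k : ℕ) (n : Fin (d + 2) → ℤ) (hn : IsNatVec n) :
    ((tot n : ℝ) - (n 0 : ℝ)) * qt k n
      = (∑ i ∈ univ.erase 0,
          (n i : ℝ) * ((n i : ℝ) - 1 + θ * P 0 i) * qt k (n - stdE i))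
        + (if 1 ≤ k then
            ((n 0 : ℝ) * ((n 0 : ℝ) - 1 + θ * P 0 0)
                - (tot n : ℝ) * ((tot n : ℝ) - 1 + θ)) * qt (k - 1) n
            + (∑ i ∈ univ.erase 0, ∑ j ∈ univ.erase 0,
                (n i : ℝ) * θ * (P j i - P 0 i) * qt (k - 1) (n - stdE i + stdE j))
            + (tot n : ℝ) * ∑ i ∈ univ.erase 0, qt (k - 1) (n + stdE i)
          else 0)
        + (if 2 ≤ k then
            ∑ j ∈ univ.erase 0,
              (n 0 : ℝ) * ((n 0 : ℝ) - 1 + θ * P j 0) * qt (k - 2) (n - stdE 0 + stdE j)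
          else 0) := by
  have hE := hq.hasAsympExpansion_rescaledProb hqt
  have hA := HasAsympExpansion.sum (univ.erase 0) fun i _ =>
    (hE (n - stdE i)).const_mul ((n i : ℝ) * ((n i : ℝ) - 1 + θ * P 0 i))
  have hB := (((hE n).const_mul
      ((n 0 : ℝ) * ((n 0 : ℝ) - 1 + θ * P 0 0) - (tot n : ℝ) * ((tot n : ℝ) - 1 + θ))).add
    (HasAsympExpansion.sum (univ.erase 0) fun i _ => HasAsympExpansion.sum (univ.erase 0)
      fun j _ => (hE (n - stdE i + stdE j)).const_mul ((n i : ℝ) * θ * (P j i - P 0 i)))).add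
    ((HasAsympExpansion.sum (univ.erase 0) fun i _ => hE (n + stdE i)).const_mul (tot n : ℝ))
  have hC := HasAsympExpansion.sum (univ.erase 0) fun j _ =>
    (hE (n - stdE 0 + stdE j)).const_mul ((n 0 : ℝ) * ((n 0 : ℝ) - 1 + θ * P j 0))
  have hrhs := (hA.add (hB.inv_pow_mul 1)).add (hC.inv_pow_mul 2)
  refine congrFun (((hE n).const_mul ((tot n : ℝ) - n 0)).unique (hrhs.congr ?_)) k
  filter_upwards [eventually_gt_atTop 0] with σ hσ
  rw [pow_one]
  exact (hq.rescaledProb_recursion hn hσ).symm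

/-- **Theorem 4.3(IV)** (recursion, general): for every `n ∈ ℕ^d` with `‖n‖ > 1`. -/
theorem recursion_general {d : ℕ} (θ : ℝ) (hθ : 0 < θ)
    (P : Fin (d + 2) → Fin (d + 2) → ℝ)
    (hPnonneg : ∀ i j, 0 ≤ P i j) (hProw : ∀ i, ∑ j, P i j = 1)
    (q : ℝ → (Fin (d + 2) → ℤ) → ℝ) (qt : ℕ → (Fin (d + 2) → ℤ) → ℝ)
    (hq : IsSamplingFamily θ P q) (hqt : IsExpansionCoeffs q qt)
    (k : ℕ) (n : Fin (d + 2) → ℤ) (hn : IsNatVec n) (hsize : 1 < tot n) :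
    ((tot n : ℝ) - (n 0 : ℝ)) * qt k n
      = (∑ i ∈ univ.erase 0,
          (n i : ℝ) * ((n i : ℝ) - 1 + θ * P 0 i) * qt k (n - stdE i))
        + (if 1 ≤ k then
            ((n 0 : ℝ) * ((n 0 : ℝ) - 1 + θ * P 0 0)
                - (tot n : ℝ) * ((tot n : ℝ) - 1 + θ)) * qt (k - 1) n
            + (∑ i ∈ univ.erase 0, ∑ j ∈ univ.erase 0,
                (n i : ℝ) * θ * (P j i - P 0 i) * qt (k - 1) (n - stdE i + stdE j))
            + (tot n : ℝ) * ∑ i ∈ univ.erase 0, qt (k - 1) (n + stdE i)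
          else 0)
        + (if 2 ≤ k then
            ∑ j ∈ univ.erase 0,
              (n 0 : ℝ) * ((n 0 : ℝ) - 1 + θ * P j 0) * qt (k - 2) (n - stdE 0 + stdE j)
          else 0) :=
  recursion_general_general θ P q qt hq hqt k n hn
end
end

section
/- Assume P_{1i} > 0 for i = 2,…,d. Let q^{(σ)} be a family of sampling probabilities and let q̃_k (k ∈ ℕ) be a family of asymptotic-expansion coefficients for q^{(σ)}. Then the leading coefficient is given explicitly by q̃_0(n) = ∏_{i=2}^d Γ(θP_{1i} + n_i)/Γ(θP_{1i}) for every n ∈ ℕ^d, where Γ denotes the Gamma function. -/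
/-!
Write `r(n) = ‖n‖ - n_1`, so that `σ^{r(n)} q^{(σ)}(n) → q̃_0(n)`. Multiplying the consistency
condition by `σ^{r(n)}` and the recursion by `σ^{r(n)-1}` and letting `σ → ∞` keeps only the
terms of exact order, which gives `q̃_0(n + e_1) = q̃_0(n)` and
`r(n) q̃_0(n) = ∑_{i ≥ 2} n_i (n_i - 1 + θ P_{1i}) q̃_0(n - e_i)`.
Together with `q̃_0(0) = 1` these relations determine `q̃_0` on `ℕ^d` by induction on `‖n‖`,
and the Gamma product satisfies them because `Γ(x + 1) = x Γ(x)`.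
-/

open Finset Filter Asymptotics

noncomputable section

namespace SamplingRecursion

open Topology

theorem tendsto_sum_single {ι : Type*} [Fintype ι] [DecidableEq ι] {l : Filter ℝ}
    {f : ι → ℝ → ℝ} (i₀ : ι) {y : ℝ} (h₀ : Tendsto (f i₀) l (𝓝 y))
    (h : ∀ i ≠ i₀, Tendsto (f i) l (𝓝 0)) :
    Tendsto (fun σ => ∑ i, f i σ) l (𝓝 y) := by
  have hlim : ∀ i ∈ univ, Tendsto (f i) l (𝓝 ((Pi.single i₀ y : ι → ℝ) i)) := fun i _ => by
    by_cases hi : i = i₀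
    · subst hi; simpa using h₀
    · simpa [hi] using h i hi
  simpa using tendsto_finsetSum univ hlim

theorem tendsto_sum_erase {ι : Type*} [Fintype ι] [DecidableEq ι] {l : Filter ℝ}
    {f : ι → ℝ → ℝ} {x : ι → ℝ} (i₀ : ι) (h₀ : Tendsto (f i₀) l (𝓝 0))
    (h : ∀ i ≠ i₀, Tendsto (f i) l (𝓝 (x i))) :
    Tendsto (fun σ => ∑ i, f i σ) l (𝓝 (∑ i ∈ univ.erase i₀, x i)) := by
  have := h₀.add (tendsto_finsetSum (univ.erase i₀) fun i hi => h i (ne_of_mem_erase hi))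
  rw [zero_add] at this
  exact this.congr fun σ => add_sum_erase _ (f · σ) (mem_univ i₀)

variable {d : ℕ}

theorem tot_add (m n : Fin d → ℤ) : tot (m + n) = tot m + tot n := sum_add_distrib

theorem tot_sub (m n : Fin d → ℤ) : tot (m - n) = tot m - tot n := sum_sub_distrib _ _

@[simp] theorem tot_stdE (i : Fin d) : tot (stdE i) = 1 := by
  simp [tot, stdE]

theorem IsNatVec.sub_stdE {n : Fin d → ℤ} (hn : IsNatVec n) {i : Fin d} (hi : 1 ≤ n i) :
    IsNatVec (n - stdE i) := fun j => by
  have := hn j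
  simp only [Pi.sub_apply, stdE]
  split_ifs with h
  · subst h; omega
  · omega

theorem IsNatVec.tot_nonneg {n : Fin d → ℤ} (hn : IsNatVec n) : 0 ≤ tot n :=
  sum_nonneg fun i _ => hn i

theorem IsNatVec.tot_pos {n : Fin d → ℤ} (hn : IsNatVec n) (hn0 : n ≠ 0) : 0 < tot n := by
  obtain ⟨i, hi⟩ := Function.ne_iff.1 hn0
  exact ((hn i).lt_of_ne' hi).trans_le (single_le_sum (fun j _ => hn j) (mem_univ i))

variable [NeZero d]

def tailTot (n : Fin d → ℤ) : ℤ := tot n - n 0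

theorem tailTot_eq_sum_erase (n : Fin d → ℤ) : tailTot n = ∑ i ∈ univ.erase 0, n i := by
  rw [tailTot, tot, ← add_sum_erase _ _ (mem_univ 0), add_sub_cancel_left]

theorem tailTot_add (m n : Fin d → ℤ) : tailTot (m + n) = tailTot m + tailTot n := by
  simp only [tailTot, tot_add, Pi.add_apply]; ring

theorem tailTot_sub (m n : Fin d → ℤ) : tailTot (m - n) = tailTot m - tailTot n := by
  simp only [tailTot, tot_sub, Pi.sub_apply]; ring

theorem IsNatVec.tailTot_nonneg {n : Fin d → ℤ} (hn : IsNatVec n) : 0 ≤ tailTot n := by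
  rw [tailTot_eq_sum_erase]
  exact sum_nonneg fun i _ => hn i

theorem tailTot_stdE (i : Fin d) : tailTot (stdE i) = if i = 0 then 0 else 1 := by
  split_ifs with hi
  · subst hi; simp [tailTot, stdE]
  · simp [tailTot, stdE, Ne.symm hi]

section Limits

variable {θ : ℝ} {P : Fin d → Fin d → ℝ} {q : ℝ → (Fin d → ℤ) → ℝ} {qt : ℕ → (Fin d → ℤ) → ℝ}

theorem tendsto_zpow_tailTot_mul (hq : IsSamplingFamily θ P q) (hqt : IsExpansionCoeffs q qt)
    (m : Fin d → ℤ) : Tendsto (fun σ => σ ^ tailTot m * q σ m) atTop (𝓝 (qt 0 m)) := by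
  by_cases hm : IsNatVec m
  · have hO := hqt.2.2.2 m hm 0
    simp only [zero_add, range_one, sum_singleton, CharP.cast_eq_zero, neg_zero, zpow_zero,
      mul_one] at hO
    simpa [tailTot] using
      (hO.trans_tendsto (tendsto_zpow_atTop_zero (by norm_num))).add_const (qt 0 m)
  · obtain ⟨i, hi⟩ : ∃ i, m i < 0 := by simpa [IsNatVec] using hm
    rw [hqt.2.2.1 0 m ⟨i, hi⟩]
    refine tendsto_const_nhds.congr' ?_
    filter_upwards [eventually_gt_atTop 0] with σ hσ
    rw [hq.2.1 σ hσ m ⟨i, hi⟩, mul_zero]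

theorem tendsto_zpow_mul_of_lt (hq : IsSamplingFamily θ P q) (hqt : IsExpansionCoeffs q qt)
    {m : Fin d → ℤ} {a : ℤ} (ha : a < tailTot m) :
    Tendsto (fun σ => σ ^ a * q σ m) atTop (𝓝 0) := by
  have h := (tendsto_zpow_atTop_zero (sub_neg.2 ha)).mul (tendsto_zpow_tailTot_mul hq hqt m)
  rw [zero_mul] at h
  refine h.congr' ?_
  filter_upwards [eventually_gt_atTop 0] with σ hσ
  rw [← mul_assoc, ← zpow_add₀ hσ.ne', sub_add_cancel]

theorem qt_zero_add_stdE_zero (hq : IsSamplingFamily θ P q) (hqt : IsExpansionCoeffs q qt)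
    {m : Fin d → ℤ} (hm : IsNatVec m) : qt 0 (m + stdE 0) = qt 0 m := by
  have hrest : Tendsto (fun σ => ∑ i ∈ univ.erase 0, σ ^ tailTot m * q σ (m + stdE i)) atTop
      (𝓝 0) := by
    simpa using tendsto_finsetSum (univ.erase 0) fun i hi =>
      tendsto_zpow_mul_of_lt hq hqt (m := m + stdE i) (a := tailTot m)
        (by simp [tailTot_add, tailTot_stdE, ne_of_mem_erase hi])
  refine tendsto_nhds_unique (tendsto_zpow_tailTot_mul hq hqt _) ?_
  simpa using ((tendsto_zpow_tailTot_mul hq hqt m).sub hrest).congr' <| by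
    filter_upwards [eventually_gt_atTop 0] with σ hσ
    have hcons := hq.2.2.1 σ hσ m hm
    rw [← add_sum_erase _ _ (mem_univ 0)] at hcons
    rw [tailTot_add, tailTot_stdE, if_pos rfl, add_zero, ← mul_sum]
    linear_combination -(σ ^ tailTot m) * hcons

theorem tailTot_mul_qt_zero (hq : IsSamplingFamily θ P q) (hqt : IsExpansionCoeffs q qt)
    {m : Fin d → ℤ} (hm : IsNatVec m) (hm0 : m ≠ 0) :
    (tailTot m : ℝ) * qt 0 m = ∑ i ∈ univ.erase 0, ((m i : ℝ) * (m i - 1) * qt 0 (m - stdE i)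
      + m i * θ * P 0 i * qt 0 (m - stdE i + stdE 0)) := by
  set r := tailTot m with hr
  have lim := tendsto_zpow_tailTot_mul hq hqt
  have vanish {m' : Fin d → ℤ} {a : ℤ} (ha : a < tailTot m') (c : ℝ) :
      Tendsto (fun σ => c * (σ ^ a * q σ m')) atTop (𝓝 0) := by
    simpa using (tendsto_zpow_mul_of_lt hq hqt ha).const_mul c
  have hlhs : Tendsto (fun σ => tot m * (tot m - 1 + θ) * (σ ^ (r - 1) * q σ m)
      + r * (σ ^ r * q σ m)) atTop (𝓝 (r * qt 0 m)) := by
    simpa using (vanish (sub_one_lt r) _).add ((lim m).const_mul (r : ℝ))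
  have hcoal : Tendsto (fun σ => ∑ i, (m i : ℝ) * (m i - 1) * (σ ^ (r - 1) * q σ (m - stdE i)))
      atTop (𝓝 (∑ i ∈ univ.erase 0, (m i : ℝ) * (m i - 1) * qt 0 (m - stdE i))) := by
    refine tendsto_sum_erase 0 (vanish (by simp [tailTot_sub, tailTot_stdE, hr]) _) fun i hi => ?_
    have : r - 1 = tailTot (m - stdE i) := by simp [tailTot_sub, tailTot_stdE, hi, hr]
    exact this ▸ (lim _).const_mul _
  have hmut : Tendsto (fun σ => ∑ i, ∑ j,
      (m i : ℝ) * θ * P j i * (σ ^ (r - 1) * q σ (m - stdE i + stdE j))) atTop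
      (𝓝 (∑ i ∈ univ.erase 0, (m i : ℝ) * θ * P 0 i * qt 0 (m - stdE i + stdE 0))) := by
    refine tendsto_sum_erase 0 ?_ fun i hi => tendsto_sum_single 0 ?_ fun j hj => ?_
    · simpa using tendsto_finsetSum univ fun j _ => vanish (by
        simp only [tailTot_add, tailTot_sub, tailTot_stdE, hr]; split_ifs <;> omega) _
    · have : r - 1 = tailTot (m - stdE i + stdE 0) := by
        simp [tailTot_add, tailTot_sub, tailTot_stdE, hi, hr]
      exact this ▸ (lim _).const_mul _
    · exact vanish (by simp [tailTot_add, tailTot_sub, tailTot_stdE, hi, hj, hr]) _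
  have hsel : Tendsto (fun σ => (tot m : ℝ) * ∑ i ∈ univ.erase 0, σ ^ r * q σ (m + stdE i))
      atTop (𝓝 0) := by
    simpa using (tendsto_finsetSum (univ.erase 0) fun i hi =>
      tendsto_zpow_mul_of_lt hq hqt (m := m + stdE i) (a := r)
        (by simp [tailTot_add, tailTot_stdE, ne_of_mem_erase hi, hr])).const_mul (tot m : ℝ)
  rw [sum_add_distrib]
  refine tendsto_nhds_unique (hlhs.congr' ?_)
    (by simpa only [add_zero] using (hcoal.add hmut).add hsel)
  filter_upwards [eventually_gt_atTop 0] with σ hσ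
  have hrec := hq.2.2.2 σ hσ m hm hm0
  have hpow : σ ^ r = σ ^ (r - 1) * σ := by rw [← zpow_add_one₀ hσ.ne', sub_add_cancel]
  rw [hpow]
  have hcast : (r : ℝ) = tot m - m 0 := by rw [hr, tailTot]; push_cast; rfl
  rw [hcast]
  calc _ = σ ^ (r - 1) * (((tot m : ℝ) * (tot m - 1 + θ) + (tot m - m 0) * σ) * q σ m) := by ring
    _ = _ := by rw [hrec]
    _ = _ := by
      rw [mul_add, mul_add]
      congr 1; congr 1
      · rw [mul_sum]; exact sum_congr rfl fun _ _ => by ring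
      · simp only [mul_sum]; exact sum_congr rfl fun _ _ => sum_congr rfl fun _ _ => by ring
      · simp only [mul_sum]; exact sum_congr rfl fun _ _ => by ring

end Limits

structure IsLeadingOrderSolution (α : Fin d → ℝ) (L : (Fin d → ℤ) → ℝ) : Prop where
  map_zero : L 0 = 1
  add_stdE_zero : ∀ m, IsNatVec m → L (m + stdE 0) = L m
  tailTot_mul : ∀ m, IsNatVec m → m ≠ 0 → (tailTot m : ℝ) * L m =
    ∑ i ∈ univ.erase 0, (m i : ℝ) * (m i - 1 + α i) * L (m - stdE i)

theorem isLeadingOrderSolution_qt_zero {θ : ℝ} {P : Fin d → Fin d → ℝ}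
    {q : ℝ → (Fin d → ℤ) → ℝ} {qt : ℕ → (Fin d → ℤ) → ℝ}
    (hq : IsSamplingFamily θ P q) (hqt : IsExpansionCoeffs q qt) :
    IsLeadingOrderSolution (fun i => θ * P 0 i) (qt 0) where
  map_zero := hqt.1
  add_stdE_zero _ hm := qt_zero_add_stdE_zero hq hqt hm
  tailTot_mul m hm hm0 := by
    rw [tailTot_mul_qt_zero hq hqt hm hm0]
    refine sum_congr rfl fun i _ => ?_
    rcases (hm i).eq_or_lt with hi | hi
    · simp [← hi]
    · rw [qt_zero_add_stdE_zero hq hqt (IsNatVec.sub_stdE hm hi)]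
      ring

theorem IsLeadingOrderSolution.unique {α : Fin d → ℝ} {L L' : (Fin d → ℤ) → ℝ}
    (hL : IsLeadingOrderSolution α L) (hL' : IsLeadingOrderSolution α L') {m : Fin d → ℤ}
    (hm : IsNatVec m) : L m = L' m := by
  obtain ⟨k, hk⟩ : ∃ k : ℕ, tot m = k := ⟨(tot m).toNat, by simp [IsNatVec.tot_nonneg hm]⟩
  induction k using Nat.strong_induction_on generalizing m with
  | _ k ih =>
  have ih' {m' : Fin d → ℤ} (hm' : IsNatVec m') (hlt : tot m' < tot m) : L m' = L' m' :=
    have := IsNatVec.tot_nonneg hm'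
    ih (tot m').toNat (by omega) hm' (by omega)
  by_cases hm0 : m = 0
  · rw [hm0, hL.map_zero, hL'.map_zero]
  rcases (IsNatVec.tailTot_nonneg hm).eq_or_lt with hr | hr
  · have h0 : 1 ≤ m 0 := by
      have := IsNatVec.tot_pos hm hm0
      rw [tailTot] at hr
      omega
    have hm' := IsNatVec.sub_stdE hm h0
    rw [← sub_add_cancel m (stdE 0), hL.add_stdE_zero _ hm', hL'.add_stdE_zero _ hm']
    exact ih' hm' (by simp [tot_sub])
  · refine mul_left_cancel₀ (show (tailTot m : ℝ) ≠ 0 by exact_mod_cast hr.ne') ?_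
    rw [hL.tailTot_mul m hm hm0, hL'.tailTot_mul m hm hm0]
    refine sum_congr rfl fun i _ => ?_
    rcases (hm i).eq_or_lt with hi | hi
    · simp [← hi]
    · rw [ih' (IsNatVec.sub_stdE hm hi) (by simp [tot_sub])]

def gammaProd (α : Fin d → ℝ) (m : Fin d → ℤ) : ℝ :=
  ∏ i ∈ univ.erase 0, Real.Gamma (α i + m i) / Real.Gamma (α i)

theorem gammaProd_eq_mul_gammaProd_sub_stdE {α : Fin d → ℝ} {m : Fin d → ℤ} {i : Fin d}
    (hi : i ≠ 0) (hαi : 0 < α i) (hmi : 1 ≤ m i) :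
    gammaProd α m = (m i - 1 + α i) * gammaProd α (m - stdE i) := by
  have hmem : i ∈ univ.erase 0 := mem_erase.2 ⟨hi, mem_univ i⟩
  rw [gammaProd, gammaProd, ← mul_prod_erase _ _ hmem, ← mul_prod_erase _ _ hmem]
  have hrest : ∏ j ∈ (univ.erase 0).erase i,
      Real.Gamma (α j + ((m - stdE i) j : ℤ)) / Real.Gamma (α j) =
      ∏ j ∈ (univ.erase 0).erase i, Real.Gamma (α j + m j) / Real.Gamma (α j) :=
    prod_congr rfl fun j hj => by simp [stdE, ne_of_mem_erase hj]
  have hpos : (0 : ℝ) < α i + (m i - 1) := by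
    have : (1 : ℝ) ≤ m i := by exact_mod_cast hmi
    linarith
  have hΓ : Real.Gamma (α i + m i) = (m i - 1 + α i) * Real.Gamma (α i + (m i - 1)) := by
    have h := Real.Gamma_add_one hpos.ne'
    rw [add_sub_assoc', sub_add_cancel] at h
    rw [h, add_sub_assoc']
    ring
  have hsub : (((m - stdE i) i : ℤ) : ℝ) = m i - 1 := by simp [stdE]
  rw [hrest, hΓ, hsub]
  ring

theorem isLeadingOrderSolution_gammaProd {α : Fin d → ℝ} (hα : ∀ i ≠ 0, 0 < α i) :
    IsLeadingOrderSolution α (gammaProd α) where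
  map_zero := prod_eq_one fun i hi => by
    simp [(Real.Gamma_pos_of_pos (hα i (ne_of_mem_erase hi))).ne']
  add_stdE_zero m _ := prod_congr rfl fun i hi => by simp [stdE, ne_of_mem_erase hi]
  tailTot_mul m hm _ := by
    rw [tailTot_eq_sum_erase, Int.cast_sum, sum_mul]
    refine sum_congr rfl fun i hi => ?_
    rcases (hm i).eq_or_lt with hmi | hmi
    · simp [← hmi]
    · rw [gammaProd_eq_mul_gammaProd_sub_stdE (ne_of_mem_erase hi) (hα i (ne_of_mem_erase hi))
        hmi]
      ring

end SamplingRecursion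

open SamplingRecursion in
theorem leading_coefficient_general {d : ℕ} (θ : ℝ) (hθ : 0 < θ)
    (P : Fin (d + 2) → Fin (d + 2) → ℝ)
    (hP1pos : ∀ i : Fin (d + 2), i ≠ 0 → 0 < P 0 i)
    (q : ℝ → (Fin (d + 2) → ℤ) → ℝ) (qt : ℕ → (Fin (d + 2) → ℤ) → ℝ)
    (hq : IsSamplingFamily θ P q) (hqt : IsExpansionCoeffs q qt)
    (n : Fin (d + 2) → ℤ) (hn : IsNatVec n) :
    qt 0 n = ∏ i ∈ univ.erase 0,
      Real.Gamma (θ * P 0 i + (n i : ℝ)) / Real.Gamma (θ * P 0 i) :=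
  (isLeadingOrderSolution_qt_zero hq hqt).unique
    (isLeadingOrderSolution_gammaProd fun i hi => mul_pos hθ (hP1pos i hi)) hn

/-- **Leading coefficient** (eq. (4.9)): if `P_{1i} > 0` for `i = 2,…,d`, the leading
coefficient of the asymptotic expansion of the sampling probability is
`q̃_0(n) = ∏_{i=2}^d Γ(θP_{1i}+n_i)/Γ(θP_{1i})` for every `n ∈ ℕ^d`. -/
theorem leading_coefficient {d : ℕ} (θ : ℝ) (hθ : 0 < θ)
    (P : Fin (d + 2) → Fin (d + 2) → ℝ)
    (hPnonneg : ∀ i j, 0 ≤ P i j) (hProw : ∀ i, ∑ j, P i j = 1)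
    (hP1pos : ∀ i : Fin (d + 2), i ≠ 0 → 0 < P 0 i)
    (q : ℝ → (Fin (d + 2) → ℤ) → ℝ) (qt : ℕ → (Fin (d + 2) → ℤ) → ℝ)
    (hq : IsSamplingFamily θ P q) (hqt : IsExpansionCoeffs q qt)
    (n : Fin (d + 2) → ℤ) (hn : IsNatVec n) :
    qt 0 n = ∏ i ∈ univ.erase 0,
      Real.Gamma (θ * P 0 i + (n i : ℝ)) / Real.Gamma (θ * P 0 i) :=
  leading_coefficient_general θ hθ P hP1pos q qt hq hqt n hn
end
end
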